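/- Let x be irrational in (0,1) with a_n = a_{n+1} = 1 and a_{n-1} = a_{n+2} = m for some m ≥ 1. Then min{Θ_{n-1}(x), Θ_n(x)} ≤ (m+1)(m+2)/((m+1)² + (m+2)²) < 1/2, and max{Θ_{n-1}(x), Θ_n(x)} > m(m+1)/(m² + (m+1)²) ≥ 2/5. -/

import Mathlib

noncomputable def gaussMap (x : ℝ) : ℝ := if x = 0 then 0 else 1 / x - ⌊1 / x⌋

noncomputable def rcfA (x : ℝ) (n : ℕ) : ℤ := ⌊1 / gaussMap^[n - 1] x⌋

noncomputable def rcfP (x : ℝ) : ℕ → ℤ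
  | 0 => 0
  | 1 => 1
  | n + 2 => rcfA x (n + 2) * rcfP x (n + 1) + rcfP x n

noncomputable def rcfQ (x : ℝ) : ℕ → ℤ
  | 0 => 1
  | 1 => rcfA x 1
  | n + 2 => rcfA x (n + 2) * rcfQ x (n + 1) + rcfQ x n

noncomputable def Theta (x : ℝ) (n : ℕ) : ℝ :=
  (rcfQ x n : ℝ) ^ 2 * |x - (rcfP x n : ℝ) / (rcfQ x n : ℝ)|

lemma iter_mem (x : ℝ) (hx : x ∈ Set.Ioo (0:ℝ) 1) (hirr : Irrational x) (k : ℕ) :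
    gaussMap^[k] x ∈ Set.Ioo (0:ℝ) 1 ∧ Irrational (gaussMap^[k] x) := by
  induction k with
  | zero => exact ⟨hx, hirr⟩
  | succ k ih =>
    obtain ⟨hy, hyirr⟩ := ih
    rw [Function.iterate_succ_apply']
    set y := gaussMap^[k] x
    have hy0 : y ≠ 0 := ne_of_gt hy.1
    have h1 : gaussMap y = Int.fract (1/y) := by
      rw [gaussMap, if_neg hy0, Int.self_sub_floor]
    have hinv : Irrational (1/y) := by simpa [one_div] using hyirr.inv
    refine ⟨⟨?_, ?_⟩, ?_⟩
    · rw [h1]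
      exact Int.fract_pos.mpr (hinv.ne_int _)
    · rw [h1]; exact Int.fract_lt_one _
    · rw [h1, Int.fract]; exact hinv.sub_intCast _

lemma rel (x : ℝ) (hx : x ∈ Set.Ioo (0:ℝ) 1) (hirr : Irrational x) (k : ℕ) :
    gaussMap^[k] x * ((rcfA x (k+1) : ℝ) + gaussMap^[k+1] x) = 1 := by
  have hy := (iter_mem x hx hirr k).1
  set y := gaussMap^[k] x with hydef
  have hy0 : y ≠ 0 := ne_of_gt hy.1
  have h1 : rcfA x (k+1) = ⌊1/y⌋ := by simp [rcfA, hydef]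
  rw [Function.iterate_succ_apply', h1]
  show y * ((⌊1/y⌋ : ℝ) + gaussMap y) = 1
  simp only [gaussMap, if_neg hy0]
  have h2 : ((⌊1/y⌋:ℝ)) + (1/y - ⌊1/y⌋) = 1/y := by ring
  rw [h2]
  field_simp

lemma one_le_a (x : ℝ) (hx : x ∈ Set.Ioo (0:ℝ) 1) (hirr : Irrational x) (k : ℕ) :
    1 ≤ rcfA x (k+1) := by
  have hy := (iter_mem x hx hirr k).1
  have h : (1:ℝ) < 1 / gaussMap^[k] x := (one_lt_div hy.1).mpr hy.2
  have : rcfA x (k+1) = ⌊1 / gaussMap^[k] x⌋ := by simp [rcfA]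
  rw [this]
  exact Int.le_floor.mpr (by exact_mod_cast h.le)

lemma one_le_q (x : ℝ) (hx : x ∈ Set.Ioo (0:ℝ) 1) (hirr : Irrational x) :
    ∀ k, 1 ≤ rcfQ x k ∧ 1 ≤ rcfQ x (k+1)
  | 0 => ⟨le_refl 1, by simpa [rcfQ] using one_le_a x hx hirr 0⟩
  | k + 1 => by
    obtain ⟨h0, h1⟩ := one_le_q x hx hirr k
    refine ⟨h1, ?_⟩
    have ha := one_le_a x hx hirr (k+1)
    show 1 ≤ rcfA x (k+2) * rcfQ x (k+1) + rcfQ x k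
    nlinarith

lemma ident (x : ℝ) (hx : x ∈ Set.Ioo (0:ℝ) 1) (hirr : Irrational x) : ∀ k,
    x * ((rcfQ x (k+1) : ℝ) + (rcfQ x k : ℝ) * gaussMap^[k+1] x)
      = (rcfP x (k+1) : ℝ) + (rcfP x k : ℝ) * gaussMap^[k+1] x := by
  intro k
  induction k with
  | zero =>
    have h := rel x hx hirr 0
    simp only [Function.iterate_zero_apply] at h
    simp only [zero_add] at h ⊢
    simp only [rcfQ, rcfP]
    push_cast
    linear_combination h
  | succ k ih =>
    have hrel := rel x hx hirr (k+1)
    have hy0 : gaussMap^[k+1] x ≠ 0 := ne_of_gt (iter_mem x hx hirr (k+1)).1.1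
    set Y := gaussMap^[k+1] x
    set Z := gaussMap^[k+2] x
    show x * ((((rcfA x (k+2)) * rcfQ x (k+1) + rcfQ x k : ℤ) : ℝ) + (rcfQ x (k+1) : ℝ) * Z)
      = (((rcfA x (k+2)) * rcfP x (k+1) + rcfP x k : ℤ) : ℝ) + (rcfP x (k+1) : ℝ) * Z
    push_cast
    apply mul_left_cancel₀ hy0
    linear_combination ih + (x * (rcfQ x (k+1):ℝ) - (rcfP x (k+1):ℝ)) * hrel

lemma det (x : ℝ) : ∀ k, rcfP x (k+1) * rcfQ x k - rcfP x k * rcfQ x (k+1) = (-1:ℤ)^k := by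
  intro k
  induction k with
  | zero => simp [rcfP, rcfQ]
  | succ k ih =>
    show (rcfA x (k+2) * rcfP x (k+1) + rcfP x k) * rcfQ x (k+1)
        - rcfP x (k+1) * (rcfA x (k+2) * rcfQ x (k+1) + rcfQ x k) = (-1:ℤ)^(k+1)
    linear_combination -ih

lemma haux1 (Qa D : ℝ) (hQa : Qa ≠ 0) (hD : D ≠ 0) :
    Qa ^ 2 * (1 / D / Qa) = Qa / D := by
  field_simp

lemma haux2 (Qb t D : ℝ) (hQb : Qb ≠ 0) (hD : D ≠ 0) :
    Qb ^ 2 * (t / D / Qb) = Qb * t / D := by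
  field_simp

lemma core (M Qa Qb t u w : ℝ) (hM : 1 ≤ M) (hQa : 1 ≤ Qa) (hQb : Qa + 1 ≤ Qb)
    (ht0 : 0 < t) (hu0 : 0 < u) (hw0 : 0 < w) (hw1 : w < 1)
    (hrt : t * (1 + u) = 1) (hru : u * (M + w) = 1) :
    (min (Qa / (Qb + Qa * t)) (Qb * t / (Qb + Qa * t)) ≤
        (M + 1) * (M + 2) / ((M + 1) ^ 2 + (M + 2) ^ 2) ∧
      (M + 1) * (M + 2) / ((M + 1) ^ 2 + (M + 2) ^ 2) < 1 / 2) ∧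
    (max (Qa / (Qb + Qa * t)) (Qb * t / (Qb + Qa * t)) >
        M * (M + 1) / (M ^ 2 + (M + 1) ^ 2) ∧
      M * (M + 1) / (M ^ 2 + (M + 1) ^ 2) ≥ 2 / 5) := by
  have hQa0 : 0 < Qa := by linarith
  have hQb0 : 0 < Qb := by linarith
  have hD0 : 0 < Qb + Qa * t := by nlinarith [mul_pos hQa0 ht0]
  have key1 : (t * (M + 1) - M) * (1 + u) = u * w := by
    linear_combination (M + 1) * hrt - hru
  have key2 : ((M + 1) - t * (M + 2)) * (1 + u) = u * (1 - w) := by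
    linear_combination hru - (M + 2) * hrt
  have tb1 : M < t * (M + 1) := by
    have h : 0 < (t * (M + 1) - M) * (1 + u) := key1 ▸ mul_pos hu0 hw0
    nlinarith [h, hu0]
  have tb2 : t * (M + 2) < M + 1 := by
    have h : 0 < ((M + 1) - t * (M + 2)) * (1 + u) :=
      key2 ▸ mul_pos hu0 (by linarith : (0:ℝ) < 1 - w)
    nlinarith [h, hu0]
  have ht1 : t < 1 := by nlinarith [tb2, hM, ht0]
  have hP1 : 0 < (M + 1) ^ 2 + (M + 2) ^ 2 := by positivity
  have hP2 : 0 < M ^ 2 + (M + 1) ^ 2 := by positivity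
  refine ⟨⟨?_, ?_⟩, ?_, ?_⟩
  · rcases le_total Qa (Qb * t) with hvt | hvt
    · rw [min_eq_left (by gcongr)]
      rw [div_le_div_iff₀ hD0 hP1]
      have f1 : 0 ≤ (M + 1) * Qb - (M + 2) * Qa := by
        linarith [mul_nonneg (by linarith : (0:ℝ) ≤ M + 2) (sub_nonneg.mpr hvt),
          mul_pos hQb0 (by linarith : (0:ℝ) < (M + 1) - t * (M + 2))]
      have f2 : 0 ≤ (M + 2) * Qb - (M + 1) * Qa := by
        linarith [mul_nonneg (by linarith : (0:ℝ) ≤ M + 2)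
          (by linarith : (0:ℝ) ≤ Qb - Qa), hQb0, hQa0]
      have key : Qa * ((M + 1) ^ 2 + (M + 2) ^ 2) * Qb
          ≤ (M + 1) * (M + 2) * (Qb + Qa * t) * Qb := by
        linarith [mul_nonneg f1 f2,
          mul_nonneg (mul_nonneg (by positivity : (0:ℝ) ≤ (M + 1) * (M + 2)) hQa0.le)
            (sub_nonneg.mpr hvt)]
      exact le_of_mul_le_mul_right key hQb0
    · rw [min_eq_right (by gcongr)]
      rw [div_le_div_iff₀ hD0 hP1]
      have f1 : 0 ≤ (M + 1) - t * (M + 2) := by linarith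
      have f2 : 0 ≤ (M + 2) - t * (M + 1) := by
        linarith [mul_pos (by linarith : (0:ℝ) < M + 1) (by linarith : (0:ℝ) < 1 - t)]
      have key : Qb * t * ((M + 1) ^ 2 + (M + 2) ^ 2) * Qb
          ≤ (M + 1) * (M + 2) * (Qb + Qa * t) * Qb := by
        linarith [mul_nonneg (mul_nonneg f1 f2) (mul_pos hQb0 hQb0).le,
          mul_nonneg (mul_nonneg (mul_nonneg
            (by positivity : (0:ℝ) ≤ (M + 1) * (M + 2)) ht0.le) hQb0.le)
            (sub_nonneg.mpr hvt)]
      exact le_of_mul_le_mul_right key hQb0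
  · rw [div_lt_iff₀ hP1]; nlinarith
  · rcases le_total Qa (Qb * t) with hvt | hvt
    · rw [max_eq_right (by gcongr)]
      rw [gt_iff_lt, div_lt_div_iff₀ hP2 hD0]
      have f1 : 0 < t * (M + 1) - M := by linarith
      have f2 : 0 < (M + 1) - t * M := by
        linarith [mul_pos (by linarith : (0:ℝ) < M) (by linarith : (0:ℝ) < 1 - t)]
      have key : M * (M + 1) * (Qb + Qa * t) * Qb
          < Qb * t * (M ^ 2 + (M + 1) ^ 2) * Qb := by
        linarith [mul_pos (mul_pos f1 f2) (mul_pos hQb0 hQb0),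
          mul_nonneg (mul_nonneg (mul_nonneg
            (by positivity : (0:ℝ) ≤ M * (M + 1)) ht0.le) hQb0.le)
            (sub_nonneg.mpr hvt)]
      exact lt_of_mul_lt_mul_right key hQb0.le
    · rw [max_eq_left (by gcongr)]
      rw [gt_iff_lt, div_lt_div_iff₀ hP2 hD0]
      have f1 : 0 < (M + 1) * Qa - M * Qb := by
        linarith [mul_nonneg (by linarith : (0:ℝ) ≤ M + 1) (sub_nonneg.mpr hvt),
          mul_pos hQb0 (by linarith : (0:ℝ) < t * (M + 1) - M)]
      have f2 : 0 < (M + 1) * Qb - M * Qa := by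
        linarith [mul_nonneg (by linarith : (0:ℝ) ≤ M)
          (by linarith : (0:ℝ) ≤ Qb - Qa), hQb0]
      have key : M * (M + 1) * (Qb + Qa * t) * Qb
          < Qa * (M ^ 2 + (M + 1) ^ 2) * Qb := by
        linarith [mul_pos f1 f2,
          mul_nonneg (mul_nonneg (by positivity : (0:ℝ) ≤ M * (M + 1)) hQa0.le)
            (sub_nonneg.mpr hvt)]
      exact lt_of_mul_lt_mul_right key hQb0.le
  · rw [ge_iff_le, le_div_iff₀ hP2]
    linarith [mul_nonneg (sub_nonneg.mpr hM) (by linarith : (0:ℝ) ≤ M + 2)]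

theorem difficult_case_eq (x : ℝ) (hx : x ∈ Set.Ioo (0 : ℝ) 1) (hirr : Irrational x)
    (n : ℕ) (hn : 2 ≤ n) (m : ℕ) (hm : 1 ≤ m)
    (han : rcfA x n = 1) (han1 : rcfA x (n + 1) = 1)
    (hanm1 : rcfA x (n - 1) = m) (hanp2 : rcfA x (n + 2) = m) :
    (min (Theta x (n - 1)) (Theta x n) ≤
        ((m : ℝ) + 1) * (m + 2) / (((m : ℝ) + 1) ^ 2 + ((m : ℝ) + 2) ^ 2) ∧
      ((m : ℝ) + 1) * (m + 2) / (((m : ℝ) + 1) ^ 2 + ((m : ℝ) + 2) ^ 2) < 1 / 2) ∧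
    (max (Theta x (n - 1)) (Theta x n) >
        (m : ℝ) * (m + 1) / ((m : ℝ) ^ 2 + ((m : ℝ) + 1) ^ 2) ∧
      (m : ℝ) * (m + 1) / ((m : ℝ) ^ 2 + ((m : ℝ) + 1) ^ 2) ≥ 2 / 5) := by
  obtain ⟨k, rfl⟩ : ∃ k, n = k + 2 := ⟨n - 2, by omega⟩
  rw [show k + 2 - 1 = k + 1 from rfl]
  -- integer facts about the denominators
  have hQaZ : 1 ≤ rcfQ x (k + 1) := (one_le_q x hx hirr k).2
  have hQkZ : 1 ≤ rcfQ x k := (one_le_q x hx hirr k).1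
  have hQbZ : rcfQ x (k + 1) + 1 ≤ rcfQ x (k + 2) := by
    have hq : rcfQ x (k + 2) = rcfA x (k + 2) * rcfQ x (k + 1) + rcfQ x k := by
      simp [rcfQ]
    rw [hq, han]; linarith
  have hQa : (1 : ℝ) ≤ (rcfQ x (k + 1) : ℝ) := by exact_mod_cast hQaZ
  have hQb : (rcfQ x (k + 1) : ℝ) + 1 ≤ (rcfQ x (k + 2) : ℝ) := by exact_mod_cast hQbZ
  have hQa0 : (0 : ℝ) < (rcfQ x (k + 1) : ℝ) := by linarith
  have hQb0 : (0 : ℝ) < (rcfQ x (k + 2) : ℝ) := by linarith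
  -- Gauss map iterates
  have ht0 : 0 < gaussMap^[k + 2] x := (iter_mem x hx hirr (k + 2)).1.1
  have hu0 : 0 < gaussMap^[k + 3] x := (iter_mem x hx hirr (k + 3)).1.1
  have hw0 : 0 < gaussMap^[k + 4] x := (iter_mem x hx hirr (k + 4)).1.1
  have hw1 : gaussMap^[k + 4] x < 1 := (iter_mem x hx hirr (k + 4)).1.2
  have hM : (1 : ℝ) ≤ (m : ℝ) := by exact_mod_cast hm
  -- relations between consecutive iterates
  have hrt : gaussMap^[k + 2] x * (1 + gaussMap^[k + 3] x) = 1 := by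
    have h : gaussMap^[k + 2] x * ((rcfA x (k + 2 + 1) : ℝ) + gaussMap^[k + 3] x) = 1 :=
      rel x hx hirr (k + 2)
    rw [han1] at h
    push_cast at h
    exact h
  have hru : gaussMap^[k + 3] x * ((m : ℝ) + gaussMap^[k + 4] x) = 1 := by
    have h : gaussMap^[k + 3] x * ((rcfA x (k + 2 + 2) : ℝ) + gaussMap^[k + 4] x) = 1 :=
      rel x hx hirr (k + 3)
    rw [hanp2] at h
    push_cast at h
    exact h
  -- the key linear-fractional identity and determinant
  have hD0 : (0 : ℝ) < (rcfQ x (k + 2) : ℝ) + (rcfQ x (k + 1) : ℝ) * gaussMap^[k + 2] x := by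
    nlinarith [mul_pos hQa0 ht0]
  have hident : x * ((rcfQ x (k + 2) : ℝ) + (rcfQ x (k + 1) : ℝ) * gaussMap^[k + 2] x)
      = (rcfP x (k + 2) : ℝ) + (rcfP x (k + 1) : ℝ) * gaussMap^[k + 2] x :=
    ident x hx hirr (k + 1)
  have hdetR : (rcfP x (k + 2) : ℝ) * (rcfQ x (k + 1) : ℝ)
      - (rcfP x (k + 1) : ℝ) * (rcfQ x (k + 2) : ℝ) = (-1 : ℝ) ^ (k + 1) := by
    exact_mod_cast det x (k + 1)
  have hDe : ((rcfQ x (k + 2) : ℝ) + (rcfQ x (k + 1) : ℝ) * gaussMap^[k + 2] x)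
      * (x * (rcfQ x (k + 1) : ℝ) - (rcfP x (k + 1) : ℝ)) = (-1 : ℝ) ^ (k + 1) := by
    linear_combination (rcfQ x (k + 1) : ℝ) * hident + hdetR
  have habs : |x * (rcfQ x (k + 1) : ℝ) - (rcfP x (k + 1) : ℝ)|
      = 1 / ((rcfQ x (k + 2) : ℝ) + (rcfQ x (k + 1) : ℝ) * gaussMap^[k + 2] x) := by
    have h2 := congrArg abs hDe
    rw [abs_mul, abs_of_pos hD0] at h2
    have h3 : |(-1 : ℝ) ^ (k + 1)| = 1 := by
      rw [abs_pow, abs_neg, abs_one, one_pow]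
    rw [h3] at h2
    rw [eq_div_iff (ne_of_gt hD0)]
    linear_combination h2
  have heb : x * (rcfQ x (k + 2) : ℝ) - (rcfP x (k + 2) : ℝ)
      = -gaussMap^[k + 2] x * (x * (rcfQ x (k + 1) : ℝ) - (rcfP x (k + 1) : ℝ)) := by
    linear_combination hident
  have habsb : |x * (rcfQ x (k + 2) : ℝ) - (rcfP x (k + 2) : ℝ)|
      = gaussMap^[k + 2] x
        / ((rcfQ x (k + 2) : ℝ) + (rcfQ x (k + 1) : ℝ) * gaussMap^[k + 2] x) := by
    rw [heb, abs_mul, abs_neg, abs_of_pos ht0, habs]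
    ring
  -- the Theta formulas
  have hQane : (rcfQ x (k + 1) : ℝ) ≠ 0 := ne_of_gt hQa0
  have hQbne : (rcfQ x (k + 2) : ℝ) ≠ 0 := ne_of_gt hQb0
  have hDne : (rcfQ x (k + 2) : ℝ) + (rcfQ x (k + 1) : ℝ) * gaussMap^[k + 2] x ≠ 0 :=
    ne_of_gt hD0
  have hT1 : Theta x (k + 1) = (rcfQ x (k + 1) : ℝ)
      / ((rcfQ x (k + 2) : ℝ) + (rcfQ x (k + 1) : ℝ) * gaussMap^[k + 2] x) := by
    have e1 : x - (rcfP x (k + 1) : ℝ) / (rcfQ x (k + 1) : ℝ)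
        = (x * (rcfQ x (k + 1) : ℝ) - (rcfP x (k + 1) : ℝ)) / (rcfQ x (k + 1) : ℝ) := by
      field_simp
    simp only [Theta]
    rw [e1, abs_div, abs_of_pos hQa0, habs]
    exact haux1 _ _ hQane hDne
  have hT2 : Theta x (k + 2) = (rcfQ x (k + 2) : ℝ) * gaussMap^[k + 2] x
      / ((rcfQ x (k + 2) : ℝ) + (rcfQ x (k + 1) : ℝ) * gaussMap^[k + 2] x) := by
    have e1 : x - (rcfP x (k + 2) : ℝ) / (rcfQ x (k + 2) : ℝ)
        = (x * (rcfQ x (k + 2) : ℝ) - (rcfP x (k + 2) : ℝ)) / (rcfQ x (k + 2) : ℝ) := by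
      field_simp
    simp only [Theta]
    rw [e1, abs_div, abs_of_pos hQb0, habsb]
    exact haux2 _ _ _ hQbne hDne
  rw [hT1, hT2]
  exact core (m : ℝ) (rcfQ x (k + 1) : ℝ) (rcfQ x (k + 2) : ℝ) (gaussMap^[k + 2] x)
    (gaussMap^[k + 3] x) (gaussMap^[k + 4] x) hM hQa hQb ht0 hu0 hw0 hw1 hrt hru
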